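/- arXiv:1404.6022 — 3 statements merged into one kernel-verified Lean document; each statement's English description precedes it below -/
import Mathlib

section
/- (Gallagher's larger sieve.) There is an absolute constant C > 0 such that for every real α ∈ (0,1), every integer N ≥ 2, and every nonempty subset A ⊆ [N]: if Σ_{p ≤ N^α, p prime} (log p) / |A mod p| > log N + 1, then |A| ≤ C · N^α. -/
/-!
For each prime `p`, Cauchy–Schwarz over the residue classes of `A` gives
`|A|² / |A mod p| ≤ #{(a, b) ∈ A² : a ≡ b mod p}`. Weighting by `log p` and summing over the
primes `p ≤ Q = N^α`, the diagonal pairs contribute `|A| θ(Q)`, while a pair `a ≠ b` contributes at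
most `log |a - b| ≤ log N`, because distinct primes dividing `a - b` have product at most `|a - b|`.
Hence `|A|² (log N + 1) < |A| θ(Q) + |A|² log N`, so `|A| < θ(Q) ≤ Q log 4` by Chebyshev's bound.
-/

/-- `A` reduced modulo `p`. -/
def modImage (A : Finset ℕ) (p : ℕ) : Finset (ZMod p) :=
  A.image (fun a => (Nat.cast a : ZMod p))

/-- The primes `p ≤ P` (for a real bound `P ≥ 0`). -/
noncomputable def primesUpTo (P : ℝ) : Finset ℕ :=
  (Finset.range (⌊P⌋₊ + 1)).filter Nat.Prime

open Finset Real

theorem Finset.card_filter_eq_sum_sq_card_fiber {α β : Type*} [DecidableEq β] (s : Finset α)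
    (f : α → β) :
    #{x ∈ s ×ˢ s | f x.1 = f x.2} = ∑ c ∈ s.image f, #{x ∈ s | f x = c} ^ 2 := by
  classical
  rw [← filter_true_of_mem (s := {x ∈ s ×ˢ s | f x.1 = f x.2}) (p := fun x => f x.1 ∈ s.image f)
    (by aesop), ← sum_card_fiberwise_eq_card_filter]
  refine sum_congr rfl fun c _ => ?_
  rw [sq, ← card_product]
  congr 1
  ext ⟨x, y⟩
  simp only [mem_filter, mem_product]
  grind

theorem Finset.sq_card_le_card_image_mul_card_filter {α β : Type*} [DecidableEq β] (s : Finset α)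
    (f : α → β) : #s ^ 2 ≤ #(s.image f) * #{x ∈ s ×ˢ s | f x.1 = f x.2} := by
  rw [card_filter_eq_sum_sq_card_fiber, card_eq_sum_card_image f s]
  exact sq_sum_le_card_mul_sum_sq

theorem Finset.sum_mul_card_filter_eq_sum_sum_filter {ι κ R : Type*} [NonAssocSemiring R]
    (P : Finset ι) (T : Finset κ) (w : ι → R) (r : ι → κ → Prop) [∀ i x, Decidable (r i x)] :
    ∑ i ∈ P, w i * #{x ∈ T | r i x} = ∑ x ∈ T, ∑ i ∈ P with r i x, w i := by
  simp only [card_filter, Nat.cast_sum, Nat.cast_ite, Nat.cast_one, Nat.cast_zero, mul_sum,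
    mul_ite, mul_one, mul_zero, sum_filter]
  exact sum_comm

theorem sum_log_le_log_of_prime_dvd {s : Finset ℕ} {n : ℕ} (hn : n ≠ 0)
    (hs : ∀ p ∈ s, p.Prime) (hdvd : ∀ p ∈ s, p ∣ n) : ∑ p ∈ s, log p ≤ log n := by
  have hprod : ∏ p ∈ s, p ∣ n := prod_primes_dvd n (fun p hp => (hs p hp).prime) hdvd
  rw [← log_prod fun p hp => by exact_mod_cast (hs p hp).ne_zero, ← Nat.cast_prod]
  exact log_le_log (by exact_mod_cast Nat.pos_of_dvd_of_pos hprod (Nat.pos_of_ne_zero hn))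
    (by exact_mod_cast Nat.le_of_dvd (Nat.pos_of_ne_zero hn) hprod)

theorem sum_log_filter_natCast_eq_le_log {P : Finset ℕ} (hP : ∀ p ∈ P, p.Prime) {a b N : ℕ}
    (hab : a ≠ b) (ha : a ≤ N) (hb : b ≤ N) :
    ∑ p ∈ P with (a : ZMod p) = b, log p ≤ log N := by
  set d := ((b : ℤ) - a).natAbs
  have hd : d ≠ 0 := by omega
  calc ∑ p ∈ P with (a : ZMod p) = b, log p ≤ log d := by
        refine sum_log_le_log_of_prime_dvd hd (fun p hp => hP p (mem_filter.1 hp).1) fun p hp => ?_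
        have := (mem_filter.1 hp).2
        rw [← Int.cast_natCast, ← Int.cast_natCast (R := ZMod p) b,
          ZMod.intCast_eq_intCast_iff_dvd_sub] at this
        exact Int.natCast_dvd.1 this
    _ ≤ log N := log_le_log (by positivity) (by exact_mod_cast (show d ≤ N by omega))

theorem sum_primesUpTo_log (x : ℝ) : ∑ p ∈ primesUpTo x, log p = Chebyshev.theta x := by
  rw [Chebyshev.theta_eq_sum_Icc, primesUpTo, Nat.range_succ_eq_Icc_zero]

theorem sq_card_mul_sum_log_div_card_modImage_le {A : Finset ℕ} {N : ℕ} (hA : A ⊆ Icc 1 N)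
    {P : Finset ℕ} (hP : ∀ p ∈ P, p.Prime) :
    (#A : ℝ) ^ 2 * ∑ p ∈ P, log p / #(modImage A p) ≤
      #A * ∑ p ∈ P, log p + (#A : ℝ) ^ 2 * log N := by
  have hpair : ∀ ab ∈ A ×ˢ A, ∑ p ∈ P with (ab.1 : ZMod p) = ab.2, log p ≤
      (if ab.1 = ab.2 then ∑ p ∈ P, log p else 0) + log N := by
    rintro ⟨a, b⟩ hab
    obtain ⟨ha, hb⟩ := mem_product.1 hab
    obtain ⟨ha1, haN⟩ := mem_Icc.1 (hA ha)
    have hbN := (mem_Icc.1 (hA hb)).2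
    by_cases h : a = b
    · subst h
      simp only [filter_true, if_true]
      have : 0 ≤ log N := log_nonneg (by exact_mod_cast ha1.trans haN)
      linarith
    · simpa [h] using sum_log_filter_natCast_eq_le_log hP h haN hbN
  calc (#A : ℝ) ^ 2 * ∑ p ∈ P, log p / #(modImage A p)
      ≤ ∑ p ∈ P, log p * #{ab ∈ A ×ˢ A | (ab.1 : ZMod p) = ab.2} := by
        rw [mul_sum]
        refine sum_le_sum fun p hp => ?_
        have hcs : (#A : ℝ) ^ 2 ≤ #(modImage A p) * #{ab ∈ A ×ˢ A | (ab.1 : ZMod p) = ab.2} := by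
          exact_mod_cast sq_card_le_card_image_mul_card_filter A (fun a => (a : ZMod p))
        rw [mul_div_left_comm]
        exact mul_le_mul_of_nonneg_left
          (div_le_of_le_mul₀ (by positivity) (by positivity) (hcs.trans_eq (mul_comm _ _)))
          (log_natCast_nonneg p)
    _ = ∑ ab ∈ A ×ˢ A, ∑ p ∈ P with (ab.1 : ZMod p) = ab.2, log p :=
        sum_mul_card_filter_eq_sum_sum_filter _ _ _ _
    _ ≤ ∑ ab ∈ A ×ˢ A, ((if ab.1 = ab.2 then ∑ p ∈ P, log p else 0) + log N) := sum_le_sum hpair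
    _ = #A * ∑ p ∈ P, log p + (#A : ℝ) ^ 2 * log N := by
        rw [sum_add_distrib, sum_product, sum_const, card_product]
        simp [sq]

theorem gallagher_larger_sieve :
    ∃ C : ℝ, C > 0 ∧ ∀ α : ℝ, 0 < α → α < 1 → ∀ N : ℕ, 2 ≤ N →
      ∀ A : Finset ℕ, A ⊆ Finset.Icc 1 N → A.Nonempty →
        (∑ p ∈ primesUpTo ((N : ℝ) ^ α),
            Real.log p / ((modImage A p).card : ℝ)) > Real.log N + 1 →
        (A.card : ℝ) ≤ C * (N : ℝ) ^ α := by
  refine ⟨log 4, log_pos (by norm_num), fun α _ _ N _ A hA hAne hS => ?_⟩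
  set Q := (N : ℝ) ^ α
  have hP : ∀ p ∈ primesUpTo Q, p.Prime := fun p hp => (mem_filter.1 hp).2
  have hZ : (0 : ℝ) < #A := by exact_mod_cast hAne.card_pos
  have hsieve := sq_card_mul_sum_log_div_card_modImage_le hA hP
  have htheta : ∑ p ∈ primesUpTo Q, log p ≤ log 4 * Q := by
    rw [sum_primesUpTo_log]
    exact Chebyshev.theta_le_log4_mul_x (by positivity)
  have : (#A : ℝ) ^ 2 * (log N + 1) < #A * (log 4 * Q) + (#A : ℝ) ^ 2 * log N :=
    calc (#A : ℝ) ^ 2 * (log N + 1) < (#A : ℝ) ^ 2 * ∑ p ∈ primesUpTo Q, log p / #(modImage A p) :=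
          mul_lt_mul_of_pos_left hS (by positivity)
      _ ≤ _ := hsieve.trans (by gcongr)
  nlinarith
end

section
/- (Uniform fiber property.) Let α ∈ (0,1) and c > 0 be reals, let p be a prime, and let A be a finite nonempty set of integers. For each residue r modulo p write x_r = |{a ∈ A : a ≡ r (mod p)}|. Assume |A mod p| ≤ αp and Σ_{r mod p} x_r² ≤ (1/α + c)·|A|²/p. Then |A mod p| ≥ α(1 − cα)·p, and moreover the number of residues r ∈ A mod p with x_r < (1/α − c^{1/3})·|A|/p is at most c^{1/3}·p. -/
/-- A finite set of integers reduced modulo `p`. -/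
def modImageZ (A : Finset ℤ) (p : ℕ) : Finset (ZMod p) :=
  A.image (fun a => (Int.cast a : ZMod p))

/-- The number of elements of `A` congruent to `r` modulo `p`. -/
def fiberCardZ (A : Finset ℤ) (p : ℕ) (r : ZMod p) : ℕ :=
  (A.filter (fun a => (Int.cast a : ZMod p) = r)).card

/-!
Write `x_r` for the fibre sizes, `n = |A|` and `S = A mod p`, so that `∑_{r ∈ S} x_r = n`.
Cauchy–Schwarz gives `n² ≤ |S| ∑ x_r² ≤ |S| (1/α + c) n² / p`, which is the lower bound on `|S|`.
For the second part compare the fibres with `μ = n / (α p)`: because `|S| ≤ α p`,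
`∑_{r ∈ S} (x_r - μ)² ≤ ∑ x_r² - n² / (α p) ≤ c n² / p`. A residue with
`x_r < (1/α - c^{1/3}) n / p` lies at distance at least `c^{1/3} n / p` below `μ`, so there are at
most `(c n² / p) / (c^{1/3} n / p)² = c^{1/3} p` of them.
-/

open Finset

section WeightedCounting

variable {ι : Type*} {S B : Finset ι} {x : ι → ℝ}

theorem one_le_card_mul_of_sum_sq_le {K : ℝ} (hsum : ∑ r ∈ S, x r ≠ 0)
    (hsq : ∑ r ∈ S, x r ^ 2 ≤ K * (∑ r ∈ S, x r) ^ 2) :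
    1 ≤ (S.card : ℝ) * K := by
  have hpos : 0 < (∑ r ∈ S, x r) ^ 2 := by positivity
  have hCS : (∑ r ∈ S, x r) ^ 2 ≤ S.card * (K * (∑ r ∈ S, x r) ^ 2) :=
    sq_sum_le_card_mul_sum_sq.trans (by gcongr)
  nlinarith

theorem sum_sq_sub_mean_le {m : ℝ} (hm : 0 < m) (hS : (S.card : ℝ) ≤ m) :
    ∑ r ∈ S, (x r - (∑ r ∈ S, x r) / m) ^ 2 ≤
      ∑ r ∈ S, x r ^ 2 - (∑ r ∈ S, x r) ^ 2 / m := by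
  set n := ∑ r ∈ S, x r
  have hexpand : ∑ r ∈ S, (x r - n / m) ^ 2 =
      ∑ r ∈ S, x r ^ 2 - 2 * (n / m) * n + S.card * (n / m) ^ 2 := by
    simp only [sub_sq, sum_add_distrib, sum_sub_distrib, sum_const, nsmul_eq_mul,
      ← sum_mul, ← mul_sum, n]
    ring
  have hmean : m * (n / m) ^ 2 - 2 * (n / m) * n = -(n ^ 2 / m) := by
    field_simp
    ring
  rw [hexpand]
  nlinarith [mul_le_mul_of_nonneg_right hS (sq_nonneg (n / m))]

theorem card_mul_sq_le_sum_sq_sub {μ d : ℝ} (hBS : B ⊆ S) (hd : 0 ≤ d)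
    (hB : ∀ r ∈ B, x r ≤ μ - d) :
    (B.card : ℝ) * d ^ 2 ≤ ∑ r ∈ S, (x r - μ) ^ 2 :=
  calc (B.card : ℝ) * d ^ 2 = ∑ _r ∈ B, d ^ 2 := by rw [sum_const, nsmul_eq_mul]
    _ ≤ ∑ r ∈ B, (x r - μ) ^ 2 := sum_le_sum fun r hr => by
        rw [← neg_sub, neg_sq]
        exact pow_le_pow_left₀ hd (by linarith [hB r hr]) 2
    _ ≤ ∑ r ∈ S, (x r - μ) ^ 2 :=
        sum_le_sum_of_subset_of_nonneg hBS fun r _ _ => sq_nonneg _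

theorem card_mul_sq_le_of_sum_sq_le {m d V : ℝ} (hm : 0 < m) (hS : (S.card : ℝ) ≤ m)
    (hBS : B ⊆ S) (hd : 0 ≤ d) (hB : ∀ r ∈ B, x r ≤ (∑ r ∈ S, x r) / m - d)
    (hsq : ∑ r ∈ S, x r ^ 2 ≤ (∑ r ∈ S, x r) ^ 2 / m + V) :
    (B.card : ℝ) * d ^ 2 ≤ V := by
  have := card_mul_sq_le_sum_sq_sub hBS hd hB
  have := sum_sq_sub_mean_le (x := x) hm hS
  linarith

end WeightedCounting

section Fibers

theorem sum_fiberCardZ (A : Finset ℤ) (p : ℕ) :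
    ∑ r ∈ modImageZ A p, fiberCardZ A p r = A.card :=
  (card_eq_sum_card_image _ A).symm

variable {p : ℕ}

theorem sum_range_natCast_eq_sum_univ [NeZero p] {M : Type*} [AddCommMonoid M]
    (f : ZMod p → M) : ∑ i ∈ range p, f i = ∑ r, f r :=
  sum_nbij' (fun i => (i : ZMod p)) ZMod.val (fun _ _ => mem_univ _)
    (fun r _ => mem_range.mpr r.val_lt)
    (fun _ hi => ZMod.val_cast_of_lt (mem_range.mp hi))
    (fun r _ => ZMod.natCast_zmod_val r) (fun _ _ => rfl)

theorem fiberCardZ_eq_zero_of_notMem {A : Finset ℤ} {r : ZMod p}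
    (hr : r ∉ modImageZ A p) : fiberCardZ A p r = 0 := by
  rw [fiberCardZ, card_eq_zero, filter_eq_empty_iff]
  exact fun a ha hcast => hr (mem_image.mpr ⟨a, ha, hcast⟩)

theorem sum_range_fiberCardZ_sq [NeZero p] (A : Finset ℤ) :
    ∑ i ∈ range p, (fiberCardZ A p i : ℝ) ^ 2 =
      ∑ r ∈ modImageZ A p, (fiberCardZ A p r : ℝ) ^ 2 := by
  rw [sum_range_natCast_eq_sum_univ (fun r => (fiberCardZ A p r : ℝ) ^ 2)]
  refine (sum_subset (subset_univ _) fun r _ hr => ?_).symm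
  simp [fiberCardZ_eq_zero_of_notMem hr]

variable [NeZero p] {A : Finset ℤ} {α c : ℝ}

theorem le_card_modImageZ (hα : 0 < α) (hc : 0 ≤ c) (hA : A.Nonempty)
    (hfib : ∑ r ∈ modImageZ A p, (fiberCardZ A p r : ℝ) ^ 2 ≤ (1 / α + c) * A.card ^ 2 / p) :
    α * (1 - c * α) * p ≤ (modImageZ A p).card := by
  have hsum : ∑ r ∈ modImageZ A p, (fiberCardZ A p r : ℝ) = A.card := by
    exact_mod_cast sum_fiberCardZ A p
  have h := one_le_card_mul_of_sum_sq_le (K := (1 / α + c) / p)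
    (by rw [hsum]; exact_mod_cast hA.card_pos.ne') (by rw [hsum]; convert hfib using 1; ring)
  have hp : (0 : ℝ) < p := by exact_mod_cast NeZero.pos p
  have hS : α * p ≤ (modImageZ A p).card * (1 + c * α) := by
    field_simp at h
    linarith
  have hαc : 0 < 1 + c * α := by positivity
  nlinarith [mul_nonneg (mul_nonneg hα.le hp.le) (sq_nonneg (c * α))]

theorem card_mul_sq_le_of_fiberCardZ_lt (hα : 0 < α) (hA : A.Nonempty)
    (hsize : ((modImageZ A p).card : ℝ) ≤ α * p)
    (hfib : ∑ r ∈ modImageZ A p, (fiberCardZ A p r : ℝ) ^ 2 ≤ (1 / α + c) * A.card ^ 2 / p)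
    {t : ℝ} (ht : 0 ≤ t) {B : Finset (ZMod p)}
    (hB : ∀ r ∈ B, r ∈ modImageZ A p ∧ (fiberCardZ A p r : ℝ) < (1 / α - t) * A.card / p) :
    (B.card : ℝ) * t ^ 2 ≤ c * p := by
  have hsum : ∑ r ∈ modImageZ A p, (fiberCardZ A p r : ℝ) = A.card := by
    exact_mod_cast sum_fiberCardZ A p
  have hp : (0 : ℝ) < p := by exact_mod_cast NeZero.pos p
  have hn : (0 : ℝ) < A.card := by exact_mod_cast hA.card_pos
  have h := card_mul_sq_le_of_sum_sq_le (m := α * p) (d := t * A.card / p)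
    (V := c * A.card ^ 2 / p) (by positivity) hsize (fun r hr => (hB r hr).1) (by positivity)
    (fun r hr => by rw [hsum]; exact (hB r hr).2.le.trans_eq (by ring))
    (by rw [hsum]; convert hfib using 1; ring)
  have hscale : 0 < (A.card : ℝ) ^ 2 / p ^ 2 := by positivity
  refine le_of_mul_le_mul_right ?_ hscale
  calc (B.card : ℝ) * t ^ 2 * (A.card ^ 2 / p ^ 2) = B.card * (t * A.card / p) ^ 2 := by ring
    _ ≤ c * A.card ^ 2 / p := h
    _ = c * p * (A.card ^ 2 / p ^ 2) := by field_simp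

end Fibers

theorem uniform_fiber_property_general (α : ℝ) (hα0 : 0 < α)
    (c : ℝ) (hc : 0 < c) (p : ℕ) (hp : p.Prime)
    (A : Finset ℤ) (hA : A.Nonempty)
    (hsize : ((modImageZ A p).card : ℝ) ≤ α * p)
    (hfib : (∑ r ∈ Finset.range p, ((fiberCardZ A p (Nat.cast r) : ℝ)) ^ 2) ≤
      (1 / α + c) * (A.card : ℝ) ^ 2 / p) :
    ((modImageZ A p).card : ℝ) ≥ α * (1 - c * α) * p ∧
      ∀ B : Finset (ZMod p),
        (∀ r, r ∈ B ↔ r ∈ modImageZ A p ∧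
          (fiberCardZ A p r : ℝ) < (1 / α - c ^ ((1 : ℝ) / 3)) * (A.card : ℝ) / p) →
        (B.card : ℝ) ≤ c ^ ((1 : ℝ) / 3) * p := by
  have : NeZero p := ⟨hp.ne_zero⟩
  rw [sum_range_fiberCardZ_sq] at hfib
  refine ⟨le_card_modImageZ hα0 hc.le hA hfib, fun B hB => ?_⟩
  set t := c ^ ((1 : ℝ) / 3)
  have ht : 0 < t := by positivity
  have hct : c = t ^ 3 := by
    rw [← Real.rpow_natCast, ← Real.rpow_mul hc.le]
    norm_num
  have h := card_mul_sq_le_of_fiberCardZ_lt hα0 hA hsize hfib ht.le fun r hr => (hB r).1 hr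
  rw [hct] at h
  exact le_of_mul_le_mul_right (h.trans_eq (by ring)) (pow_pos ht 2)

theorem uniform_fiber_property (α : ℝ) (hα0 : 0 < α) (hα1 : α < 1)
    (c : ℝ) (hc : 0 < c) (p : ℕ) (hp : p.Prime)
    (A : Finset ℤ) (hA : A.Nonempty)
    (hsize : ((modImageZ A p).card : ℝ) ≤ α * p)
    (hfib : (∑ r ∈ Finset.range p, ((fiberCardZ A p (Nat.cast r) : ℝ)) ^ 2) ≤
      (1 / α + c) * (A.card : ℝ) ^ 2 / p) :
    ((modImageZ A p).card : ℝ) ≥ α * (1 - c * α) * p ∧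
      ∀ B : Finset (ZMod p),
        (∀ r, r ∈ B ↔ r ∈ modImageZ A p ∧
          (fiberCardZ A p r : ℝ) < (1 / α - c ^ ((1 : ℝ) / 3)) * (A.card : ℝ) / p) →
        (B.card : ℝ) ≤ c ^ ((1 : ℝ) / 3) * p :=
  uniform_fiber_property_general α hα0 c hc p hp A hA hsize hfib
end

section
/- Let k be a positive integer and P ≥ 1 a real. For each prime p ≤ P let h_p, h¹_p, h²_p : {1, ..., p−1} → ℂ be functions with h_p(a) = h¹_p(a) + h²_p(a) for all a. Then 2 · max( ( Σ_{p ≤ P} ( Σ_{a=1}^{p−1} |h¹_p(a)|^{2k} )^{1/(2k−1)} )^{(2k−1)/2k}, ( Σ_{p ≤ P} Σ_{a=1}^{p−1} |h²_p(a)|² )^{1/2} ) ≥ P^{−(k−1)/2k} · ( Σ_{p ≤ P} ( Σ_{a=1}^{p−1} |h_p(a)|² )^{k/(2k−1)} )^{(2k−1)/2k}, where the sums over p run over primes. -/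
open Finset Real

noncomputable def lpNormOn {α E : Type*} [SeminormedAddCommGroup E] (q : ℝ) (s : Finset α)
    (x : α → E) : ℝ :=
  (∑ i ∈ s, ‖x i‖ ^ q) ^ (1 / q)

section lpNormOn

variable {α β E F : Type*} [SeminormedAddCommGroup E] [SeminormedAddCommGroup F]
  {s : Finset α} {q : ℝ}

lemma lpNormOn_nonneg (x : α → E) : 0 ≤ lpNormOn q s x :=
  rpow_nonneg (sum_nonneg fun _ _ => rpow_nonneg (norm_nonneg _) _) _

lemma lpNormOn_le_mul (hq : 0 < q) {C : ℝ} (hC : 0 ≤ C) {x : α → E} {y : α → F}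
    (h : ∀ i ∈ s, ‖x i‖ ≤ C * ‖y i‖) : lpNormOn q s x ≤ C * lpNormOn q s y := by
  have hy : 0 ≤ ∑ i ∈ s, ‖y i‖ ^ q := sum_nonneg fun _ _ => rpow_nonneg (norm_nonneg _) _
  have hsum : ∑ i ∈ s, ‖x i‖ ^ q ≤ C ^ q * ∑ i ∈ s, ‖y i‖ ^ q := by
    rw [mul_sum]
    refine sum_le_sum fun i hi => ?_
    rw [← mul_rpow hC (norm_nonneg _)]
    exact rpow_le_rpow (norm_nonneg _) (h i hi) hq.le
  calc lpNormOn q s x ≤ (C ^ q * ∑ i ∈ s, ‖y i‖ ^ q) ^ (1 / q) :=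
        rpow_le_rpow (sum_nonneg fun _ _ => rpow_nonneg (norm_nonneg _) _) hsum (by positivity)
    _ = C * lpNormOn q s y := by
        rw [mul_rpow (rpow_nonneg hC _) hy, ← rpow_mul hC, mul_one_div_cancel hq.ne', rpow_one,
          lpNormOn]

lemma lpNormOn_mono (hq : 0 < q) {x : α → E} {y : α → F} (h : ∀ i ∈ s, ‖x i‖ ≤ ‖y i‖) :
    lpNormOn q s x ≤ lpNormOn q s y := by
  simpa using lpNormOn_le_mul hq zero_le_one (y := y) (by simpa using h)

lemma lpNormOn_add_le (hq : 1 ≤ q) (x y : α → E) :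
    lpNormOn q s (x + y) ≤ lpNormOn q s x + lpNormOn q s y :=
  calc lpNormOn q s (x + y) ≤ (∑ i ∈ s, (‖x i‖ + ‖y i‖) ^ q) ^ (1 / q) :=
        rpow_le_rpow (sum_nonneg fun _ _ => rpow_nonneg (norm_nonneg _) _)
          (sum_le_sum fun _ _ => rpow_le_rpow (norm_nonneg _) (norm_add_le _ _) (by linarith))
          (by positivity)
    _ ≤ lpNormOn q s x + lpNormOn q s y :=
        Lp_add_le_of_nonneg s hq (fun _ _ => norm_nonneg _) (fun _ _ => norm_nonneg _)

lemma lpNormOn_le_card_rpow_mul (hq : 0 < q) {q' : ℝ} (hqq' : q ≤ q') (x : α → E) :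
    lpNormOn q s x ≤ (#s : ℝ) ^ (1 / q - 1 / q') * lpNormOn q' s x := by
  have hq' : 0 < q' := hq.trans_le hqq'
  have hS : 0 ≤ ∑ i ∈ s, ‖x i‖ ^ q := sum_nonneg fun _ _ => rpow_nonneg (norm_nonneg _) _
  have hT : 0 ≤ ∑ i ∈ s, ‖x i‖ ^ q' := sum_nonneg fun _ _ => rpow_nonneg (norm_nonneg _) _
  have power_mean : (∑ i ∈ s, ‖x i‖ ^ q) ^ (q' / q) ≤
      (#s : ℝ) ^ (q' / q - 1) * ∑ i ∈ s, ‖x i‖ ^ q' := by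
    convert rpow_sum_le_const_mul_sum_rpow_of_nonneg s (f := fun i => ‖x i‖ ^ q)
      ((one_le_div hq).2 hqq') (fun _ _ => rpow_nonneg (norm_nonneg _) _) using 3 with i
    rw [← rpow_mul (norm_nonneg _), mul_div_cancel₀ _ hq.ne']
  calc lpNormOn q s x = ((∑ i ∈ s, ‖x i‖ ^ q) ^ (q' / q)) ^ (1 / q') := by
        rw [lpNormOn, ← rpow_mul hS]; congr 1; field_simp
    _ ≤ ((#s : ℝ) ^ (q' / q - 1) * ∑ i ∈ s, ‖x i‖ ^ q') ^ (1 / q') :=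
        rpow_le_rpow (rpow_nonneg hS _) power_mean (by positivity)
    _ = (#s : ℝ) ^ (1 / q - 1 / q') * lpNormOn q' s x := by
        rw [mul_rpow (rpow_nonneg (Nat.cast_nonneg _) _) hT, ← rpow_mul (Nat.cast_nonneg _),
          lpNormOn]
        congr 2
        field_simp

lemma lpNormOn_lpNormOn_eq (r : ℝ) (I : α → Finset β) (f : α → β → E) :
    lpNormOn r s (fun i => lpNormOn q (I i) (f i)) =
      (∑ i ∈ s, (∑ a ∈ I i, ‖f i a‖ ^ q) ^ (r / q)) ^ (1 / r) := by
  refine congrArg (· ^ (1 / r)) (sum_congr rfl fun i _ => ?_)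
  rw [norm_of_nonneg (lpNormOn_nonneg _), lpNormOn,
    ← rpow_mul (sum_nonneg fun _ _ => rpow_nonneg (norm_nonneg _) _), one_div_mul_eq_div]

lemma lpNormOn_lpNormOn_two_le_of_eq_add {I : α → Finset β} {P q r : ℝ} (hs : (#s : ℝ) ≤ P)
    (hI : ∀ i ∈ s, (#(I i) : ℝ) ≤ P) (hr : 1 ≤ r) (hr2 : r ≤ 2) (hq : 2 ≤ q)
    {f g h : α → β → E} (hfg : ∀ i ∈ s, ∀ a ∈ I i, h i a = f i a + g i a) :
    lpNormOn r s (fun i => lpNormOn 2 (I i) (h i)) ≤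
      P ^ (1 / 2 - 1 / q) * lpNormOn r s (fun i => lpNormOn q (I i) (f i)) +
        P ^ (1 / r - 1 / 2) * lpNormOn 2 s (fun i => lpNormOn 2 (I i) (g i)) := by
  have hP : 0 ≤ P := (Nat.cast_nonneg _).trans hs
  set F := fun i => lpNormOn 2 (I i) (f i)
  set G := fun i => lpNormOn 2 (I i) (g i)
  have split : lpNormOn r s (fun i => lpNormOn 2 (I i) (h i)) ≤ lpNormOn r s (F + G) := by
    refine lpNormOn_mono (by linarith) fun i hi => ?_
    rw [Pi.add_apply, norm_of_nonneg (lpNormOn_nonneg _),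
      norm_of_nonneg (add_nonneg (lpNormOn_nonneg _) (lpNormOn_nonneg _))]
    calc lpNormOn 2 (I i) (h i) ≤ lpNormOn 2 (I i) (f i + g i) :=
          lpNormOn_mono two_pos fun a ha => (congrArg norm (hfg i hi a ha)).le
      _ ≤ F i + G i := lpNormOn_add_le one_le_two _ _
  have hF : lpNormOn r s F ≤
      P ^ (1 / 2 - 1 / q) * lpNormOn r s (fun i => lpNormOn q (I i) (f i)) := by
    refine lpNormOn_le_mul (by linarith) (rpow_nonneg hP _) fun i hi => ?_
    rw [norm_of_nonneg (lpNormOn_nonneg _), norm_of_nonneg (lpNormOn_nonneg _)]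
    exact (lpNormOn_le_card_rpow_mul two_pos hq _).trans (mul_le_mul_of_nonneg_right
      (rpow_le_rpow (Nat.cast_nonneg _) (hI i hi)
        (sub_nonneg.2 (one_div_le_one_div_of_le two_pos hq))) (lpNormOn_nonneg _))
  have hG : lpNormOn r s G ≤ P ^ (1 / r - 1 / 2) * lpNormOn 2 s G :=
    (lpNormOn_le_card_rpow_mul (by linarith) hr2 G).trans (mul_le_mul_of_nonneg_right
      (rpow_le_rpow (Nat.cast_nonneg _) hs
        (sub_nonneg.2 (one_div_le_one_div_of_le (by linarith) hr2))) (lpNormOn_nonneg _))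
  calc _ ≤ lpNormOn r s (F + G) := split
    _ ≤ lpNormOn r s F + lpNormOn r s G := lpNormOn_add_le hr F G
    _ ≤ _ := add_le_add hF hG

end lpNormOn

lemma natCast_le_of_mem_primesUpTo {P : ℝ} (hP : 0 ≤ P) {p : ℕ} (hp : p ∈ primesUpTo P) :
    (p : ℝ) ≤ P := by
  rw [primesUpTo, mem_filter, mem_range, Nat.lt_succ_iff] at hp
  exact (Nat.le_floor_iff hP).1 hp.1

lemma card_primesUpTo_le {P : ℝ} (hP : 0 ≤ P) : (#(primesUpTo P) : ℝ) ≤ P :=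
  calc (#(primesUpTo P) : ℝ) ≤ #(Icc 1 ⌊P⌋₊) := by
        refine Nat.cast_le.2 (card_le_card fun p hp => ?_)
        rw [primesUpTo, mem_filter, mem_range] at hp
        exact mem_Icc.2 ⟨hp.2.one_lt.le, Nat.lt_succ_iff.1 hp.1⟩
    _ ≤ P := by simpa using Nat.floor_le hP

theorem dual_norm_lower_bound (k : ℕ) (hk : 0 < k) (P : ℝ) (hP : 1 ≤ P)
    (h h1 h2 : ℕ → ℕ → ℂ)
    (hsum : ∀ p ∈ primesUpTo P, ∀ a ∈ Finset.Icc 1 (p - 1),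
      h p a = h1 p a + h2 p a) :
    2 * max
        ((∑ p ∈ primesUpTo P,
            (∑ a ∈ Finset.Icc 1 (p - 1), ‖h1 p a‖ ^ (2 * k)) ^
              ((1 : ℝ) / (2 * k - 1))) ^ ((2 * (k : ℝ) - 1) / (2 * k)))
        ((∑ p ∈ primesUpTo P,
            ∑ a ∈ Finset.Icc 1 (p - 1), ‖h2 p a‖ ^ 2) ^ ((1 : ℝ) / 2)) ≥
      P ^ (-(((k : ℝ) - 1) / (2 * k))) *
        (∑ p ∈ primesUpTo P,
            (∑ a ∈ Finset.Icc 1 (p - 1), ‖h p a‖ ^ 2) ^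
              ((k : ℝ) / (2 * k - 1))) ^ ((2 * (k : ℝ) - 1) / (2 * k)) := by
  have hk1 : (1 : ℝ) ≤ k := by exact_mod_cast hk
  have hP0 : 0 < P := one_pos.trans_le hP
  set r : ℝ := 2 * k / (2 * k - 1) with hr_def
  have hr : 1 ≤ r := by rw [le_div_iff₀ (by linarith)]; linarith
  have hr2 : r ≤ 2 := by rw [div_le_iff₀ (by linarith)]; linarith
  have hcard : ∀ p ∈ primesUpTo P, (#(Icc 1 (p - 1)) : ℝ) ≤ P := fun p hp =>
    le_trans (by simp) (natCast_le_of_mem_primesUpTo hP0.le hp)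
  have key := lpNormOn_lpNormOn_two_le_of_eq_add (card_primesUpTo_le hP0.le) hcard hr hr2
    (q := ((2 * k : ℕ) : ℝ)) (by push_cast; linarith) hsum
  have hr_half : r / 2 = k / (2 * k - 1) := by rw [hr_def]; field_simp
  have hr_q : r / (2 * k) = 1 / (2 * k - 1) := by rw [hr_def]; field_simp
  have hr_inv : 1 / r = (2 * k - 1) / (2 * k) := by rw [hr_def, one_div_div]
  have hc_q : 1 / 2 - 1 / (2 * k) = ((k : ℝ) - 1) / (2 * k) := by field_simp
  have hc_r : 1 / r - 1 / 2 = ((k : ℝ) - 1) / (2 * k) := by rw [hr_inv]; field_simp; ring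
  simp only [lpNormOn_lpNormOn_eq, rpow_natCast, rpow_two] at key
  push_cast at key
  rw [hr_half, hr_q, hc_q, hc_r, hr_inv, div_self two_ne_zero] at key
  simp only [rpow_one, ← mul_add] at key
  rw [ge_iff_le]
  refine (mul_le_mul_of_nonneg_left key (rpow_nonneg hP0.le _)).trans ?_
  rw [← mul_assoc, ← rpow_add hP0, neg_add_cancel, rpow_zero, one_mul]
  exact (add_le_add (le_max_left _ _) (le_max_right _ _)).trans_eq (two_mul _).symm
end
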